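/- arXiv:math/0308091 — 3 statements merged into one kernel-verified Lean document; each statement's English description precedes it below -/
import Mathlib

section
/- Let σ be a piecewise linear rearrangement, i.e. σ(0)=0 and σ(2^k + m) = 2^k + σ_k(m) for k ≥ 0 and 0 ≤ m < 2^k, where each σ_k : [0,2^k) → [0,2^k) is a bijection satisfying σ_k(a ⊕ b) = σ_k(a) ⊕ σ_k(b) whenever a, b, a ⊕ b ∈ [0,2^k). Then for every n, #Ã_n^σ ≤ 6^n, where Ã_n^σ = { (k,l,m) ∈ [2^n, 2^{n+1})³ : k+l-m ∈ [2^n, 2^{n+1}) and σ(k) ⊕ σ(l) ⊕ σ(m) = σ(k+l-m) }. -/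
/-- `Atil n τ`: triples `(k,l,m) ∈ [2^n, 2^(n+1))³` with `k+l-m ∈ [2^n, 2^(n+1))` and
`τ(k) ⊕ τ(l) ⊕ τ(m) = τ(k+l-m)`. -/
def Atil (n : ℕ) (τ : ℕ → ℕ) : Finset (ℕ × ℕ × ℕ) :=
  (Finset.Ico (2 ^ n) (2 ^ (n + 1)) ×ˢ Finset.Ico (2 ^ n) (2 ^ (n + 1)) ×ˢ
      Finset.Ico (2 ^ n) (2 ^ (n + 1))).filter
    (fun p => p.2.2 ≤ p.1 + p.2.1 ∧ 2 ^ n ≤ p.1 + p.2.1 - p.2.2 ∧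
      p.1 + p.2.1 - p.2.2 < 2 ^ (n + 1) ∧
      τ p.1 ^^^ τ p.2.1 ^^^ τ p.2.2 = τ (p.1 + p.2.1 - p.2.2))

theorem addXorAnd (x : ℕ) : ∀ y : ℕ, x + y = (x ^^^ y) + 2 * (x &&& y) := by
  induction x using Nat.strong_induction_on with
  | _ x ih =>
    intro y
    rcases Nat.eq_zero_or_pos x with rfl | hx
    · simp
    · have h2 : x / 2 < x := Nat.div_lt_self hx one_lt_two
      have ihh := ih (x / 2) h2 (y / 2)
      have e1 : (x ^^^ y) = 2 * ((x / 2) ^^^ (y / 2)) + (x ^^^ y) % 2 := by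
        rw [← Nat.xor_div_two]; omega
      have e2 : (x &&& y) = 2 * ((x / 2) &&& (y / 2)) + (x &&& y) % 2 := by
        rw [← Nat.and_div_two]; omega
      have m1 : (x ^^^ y) % 2 = (x + y) % 2 := Nat.xor_mod_two_eq
      have hb := Nat.testBit_land x y 0
      simp only [Nat.testBit_zero, ← Bool.decide_and, decide_eq_decide] at hb
      omega

theorem xor4 (x a b c : ℕ) : (x ^^^ a) ^^^ (x ^^^ b) ^^^ (x ^^^ c) = x ^^^ (a ^^^ b ^^^ c) := by
  apply Nat.eq_of_testBit_eq
  intro i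
  simp only [Nat.testBit_xor]
  cases x.testBit i <;> cases a.testBit i <;> cases b.testBit i <;> cases c.testBit i <;> rfl

theorem two_pow_add_eq_xor {n x : ℕ} (h : x < 2 ^ n) : 2 ^ n + x = 2 ^ n ^^^ x := by
  have h1 : 2 ^ n &&& x = 0 := by
    rw [Nat.two_pow_and, Nat.testBit_lt_two_pow h]
    simp
  have := addXorAnd (2 ^ n) x
  omega

theorem stmt_12 (σ : ℕ → ℕ) (hσ : Function.Bijective σ) (h0 : σ 0 = 0)
    (σk : ℕ → ℕ → ℕ)
    (hbij : ∀ k, Set.BijOn (σk k) (Set.Iio (2 ^ k)) (Set.Iio (2 ^ k)))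
    (hlin : ∀ k a b : ℕ, a < 2 ^ k → b < 2 ^ k → a ^^^ b < 2 ^ k →
      σk k (a ^^^ b) = σk k a ^^^ σk k b)
    (hσdef : ∀ k m : ℕ, m < 2 ^ k → σ (2 ^ k + m) = 2 ^ k + σk k m) (n : ℕ) :
    (Atil n σ).card ≤ 6 ^ n := by
  classical
  set P : Finset (Bool × Bool × Bool) :=
    Finset.univ.filter
      (fun t => (t.1 && t.2.1) = (t.2.2 && ((t.1 ^^ t.2.1) ^^ t.2.2))) with hP
  have hPcard : P.card = 6 := by decide
  have key : ∀ p ∈ Atil n σ, ∃ a b c : ℕ, a < 2 ^ n ∧ b < 2 ^ n ∧ c < 2 ^ n ∧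
      p.1 = 2 ^ n + a ∧ p.2.1 = 2 ^ n + b ∧ p.2.2 = 2 ^ n + c ∧
      (a &&& b) = (c &&& (a ^^^ b ^^^ c)) := by
    intro p hp
    simp only [Atil, Finset.mem_filter, Finset.mem_product, Finset.mem_Ico] at hp
    obtain ⟨⟨⟨hk1, hk2⟩, ⟨hl1, hl2⟩, hm1, hm2⟩, hle, hd1, hd2, heq⟩ := hp
    have h2n : 2 ^ (n + 1) = 2 ^ n + 2 ^ n := by ring
    refine ⟨p.1 - 2 ^ n, p.2.1 - 2 ^ n, p.2.2 - 2 ^ n, by omega, by omega, by omega,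
      by omega, by omega, by omega, ?_⟩
    set a := p.1 - 2 ^ n
    set b := p.2.1 - 2 ^ n
    set c := p.2.2 - 2 ^ n
    have ha : a < 2 ^ n := by omega
    have hb : b < 2 ^ n := by omega
    have hc : c < 2 ^ n := by omega
    have hcab : c ≤ a + b := by omega
    set d := a + b - c with hdd
    have hd : d < 2 ^ n := by omega
    have hkl : p.1 + p.2.1 - p.2.2 = 2 ^ n + d := by omega
    have hsa := (hbij n).mapsTo (show a ∈ Set.Iio (2 ^ n) from ha)
    have hsb := (hbij n).mapsTo (show b ∈ Set.Iio (2 ^ n) from hb)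
    have hsc := (hbij n).mapsTo (show c ∈ Set.Iio (2 ^ n) from hc)
    have hsd := (hbij n).mapsTo (show d ∈ Set.Iio (2 ^ n) from hd)
    simp only [Set.mem_Iio] at hsa hsb hsc hsd
    have e1 : σ p.1 = 2 ^ n ^^^ σk n a := by
      rw [show p.1 = 2 ^ n + a by omega, hσdef n a ha, two_pow_add_eq_xor hsa]
    have e2 : σ p.2.1 = 2 ^ n ^^^ σk n b := by
      rw [show p.2.1 = 2 ^ n + b by omega, hσdef n b hb, two_pow_add_eq_xor hsb]
    have e3 : σ p.2.2 = 2 ^ n ^^^ σk n c := by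
      rw [show p.2.2 = 2 ^ n + c by omega, hσdef n c hc, two_pow_add_eq_xor hsc]
    have e4 : σ (p.1 + p.2.1 - p.2.2) = 2 ^ n ^^^ σk n d := by
      rw [hkl, hσdef n d hd, two_pow_add_eq_xor hsd]
    rw [e1, e2, e3, e4, xor4] at heq
    have hxoreq : σk n a ^^^ σk n b ^^^ σk n c = σk n d :=
      Nat.xor_right_injective heq
    have hab : a ^^^ b < 2 ^ n := Nat.xor_lt_two_pow ha hb
    have habc : a ^^^ b ^^^ c < 2 ^ n := Nat.xor_lt_two_pow hab hc
    have hlin1 := hlin n a b ha hb hab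
    have hlin2 := hlin n (a ^^^ b) c hab hc habc
    have hσeq : σk n (a ^^^ b ^^^ c) = σk n d := by rw [hlin2, hlin1, hxoreq]
    have habcd : a ^^^ b ^^^ c = d :=
      (hbij n).injOn (Set.mem_Iio.mpr habc) (Set.mem_Iio.mpr hd) hσeq
    have hsum : a + b = c + (a ^^^ b ^^^ c) := by omega
    have i1 := addXorAnd a b
    have i2 := addXorAnd c (a ^^^ b ^^^ c)
    have hcx : c ^^^ (a ^^^ b ^^^ c) = a ^^^ b := by
      rw [Nat.xor_comm c, Nat.xor_assoc, Nat.xor_self, Nat.xor_zero]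
    rw [hcx] at i2
    omega
  calc (Atil n σ).card ≤ (Fintype.piFinset (fun _ : Fin n => P)).card := by
        apply Finset.card_le_card_of_injOn
          (fun p (i : Fin n) => ((p.1 - 2 ^ n).testBit i, (p.2.1 - 2 ^ n).testBit i,
            (p.2.2 - 2 ^ n).testBit i))
        · intro p hp
          obtain ⟨a, b, c, ha, hb, hc, hpa, hpb, hpc, hand⟩ := key p hp
          rw [Finset.mem_coe, Fintype.mem_piFinset]
          intro i
          rw [hP, Finset.mem_filter]
          refine ⟨Finset.mem_univ _, ?_⟩
          have hthis := congrArg (fun x => x.testBit (i : ℕ)) hand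
          simp only [Nat.testBit_land, Nat.testBit_xor] at hthis
          beta_reduce
          rw [show p.1 - 2 ^ n = a by omega, show p.2.1 - 2 ^ n = b by omega,
            show p.2.2 - 2 ^ n = c by omega]
          simpa using hthis
        · intro p hp q hq hfe
          obtain ⟨a, b, c, ha, hb, hc, hpa, hpb, hpc, -⟩ := key p hp
          obtain ⟨a', b', c', ha', hb', hc', hqa, hqb, hqc, -⟩ := key q hq
          have hbit : ∀ i : Fin n,
              ((p.1 - 2 ^ n).testBit i = (q.1 - 2 ^ n).testBit i) ∧
              ((p.2.1 - 2 ^ n).testBit i = (q.2.1 - 2 ^ n).testBit i) ∧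
              ((p.2.2 - 2 ^ n).testBit i = (q.2.2 - 2 ^ n).testBit i) := by
            intro i
            have := congrFun hfe i
            simpa [Prod.ext_iff] using this
          have heqbits : ∀ (x y : ℕ), x < 2 ^ n → y < 2 ^ n →
              (∀ i : Fin n, x.testBit i = y.testBit i) → x = y := by
            intro x y hx hy h
            apply Nat.eq_of_testBit_eq
            intro i
            by_cases hi : i < n
            · exact h ⟨i, hi⟩
            · rw [Nat.testBit_lt_two_pow
                  (lt_of_lt_of_le hx (Nat.pow_le_pow_right (by norm_num) (by omega))),
                Nat.testBit_lt_two_pow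
                  (lt_of_lt_of_le hy (Nat.pow_le_pow_right (by norm_num) (by omega)))]
          have h1 : p.1 - 2 ^ n = q.1 - 2 ^ n :=
            heqbits _ _ (by omega) (by omega) (fun i => (hbit i).1)
          have h2 : p.2.1 - 2 ^ n = q.2.1 - 2 ^ n :=
            heqbits _ _ (by omega) (by omega) (fun i => (hbit i).2.1)
          have h3 : p.2.2 - 2 ^ n = q.2.2 - 2 ^ n :=
            heqbits _ _ (by omega) (by omega) (fun i => (hbit i).2.2)
          exact Prod.ext (by omega) (Prod.ext (by omega) (by omega))
    _ = 6 ^ n := by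
        rw [Fintype.card_piFinset]
        simp [hPcard]
end

section
/- If σ is a dyadically linear permutation of ℕ, then for every n, #B_n^σ ≤ 3^n, where B_n^σ = { (k,l) ∈ [0,2^n)² : k+l ∈ [0,2^n) and σ(k) ⊕ σ(l) = σ(k+l) }. -/
/-!
Since σ is injective and additive for `^^^`, the equation `σ k ^^^ σ l = σ (k + l)` forces
`k ^^^ l = k + l`, i.e. `k &&& l = 0` because `k + l = (k ^^^ l) + 2 * (k &&& l)`.
A pair of `n`-bit numbers with no common bit is determined by its `n` bit pairs, each of which
is one of `(0,0)`, `(1,0)`, `(0,1)`; hence there are at most `3 ^ n` such pairs.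
-/

theorem Nat.add_eq_xor_add_two_mul_and (k l : ℕ) : k + l = (k ^^^ l) + 2 * (k &&& l) := by
  induction k using Nat.strongRecOn generalizing l with
  | ind k ih =>
    rcases Nat.eq_zero_or_pos k with rfl | hk
    · simp
    have halves := ih (k / 2) (Nat.div_lt_self hk one_lt_two) (l / 2)
    rw [← Nat.xor_div_two, ← Nat.and_div_two] at halves
    have hxor : (k ^^^ l) % 2 = (k + l) % 2 := Nat.xor_mod_two_eq
    have hand : (k &&& l) % 2 = 1 ↔ k % 2 = 1 ∧ l % 2 = 1 := by
      simp only [Nat.mod_two_eq_one_iff_testBit_zero, Nat.testBit_and, Bool.and_eq_true]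
    omega

theorem Nat.and_eq_zero_of_xor_eq_add {k l : ℕ} (h : k ^^^ l = k + l) : k &&& l = 0 := by
  have := Nat.add_eq_xor_add_two_mul_and k l
  omega

theorem Nat.eq_of_testBit_eq_of_lt_two_pow {a b n : ℕ} (ha : a < 2 ^ n) (hb : b < 2 ^ n)
    (h : ∀ i < n, a.testBit i = b.testBit i) : a = b := by
  refine Nat.eq_of_testBit_eq fun i => ?_
  rcases lt_or_ge i n with hi | hi
  · exact h i hi
  · have hpow : 2 ^ n ≤ 2 ^ i := Nat.pow_le_pow_right two_pos hi
    rw [Nat.testBit_lt_two_pow (ha.trans_le hpow), Nat.testBit_lt_two_pow (hb.trans_le hpow)]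

def bitPairs (n : ℕ) (p : ℕ × ℕ) : Fin n → Bool × Bool :=
  fun i => (p.1.testBit i, p.2.testBit i)

theorem bitPairs_injOn (n : ℕ) : Set.InjOn (bitPairs n) {p | p.1 < 2 ^ n ∧ p.2 < 2 ^ n} := by
  rintro p ⟨hp₁, hp₂⟩ q ⟨hq₁, hq₂⟩ hpq
  have hbits (i : ℕ) (hi : i < n) := congrFun hpq ⟨i, hi⟩
  simp only [bitPairs, Prod.mk.injEq] at hbits
  exact Prod.ext (Nat.eq_of_testBit_eq_of_lt_two_pow hp₁ hq₁ fun i hi => (hbits i hi).1)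
    (Nat.eq_of_testBit_eq_of_lt_two_pow hp₂ hq₂ fun i hi => (hbits i hi).2)

theorem bitPairs_mem_piFinset {n : ℕ} {p : ℕ × ℕ} (h : p.1 &&& p.2 = 0) :
    bitPairs n p ∈ Fintype.piFinset fun _ =>
      ({(false, false), (true, false), (false, true)} : Finset (Bool × Bool)) := by
  rw [Fintype.mem_piFinset]
  intro i
  have hdisj : (p.1.testBit i && p.2.testBit i) = false := by
    rw [← Nat.testBit_and, h, Nat.zero_testBit]
  simp only [bitPairs]
  revert hdisj
  cases p.1.testBit i <;> cases p.2.testBit i <;> decide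

theorem card_filter_and_eq_zero_le (n : ℕ) :
    ((Finset.range (2 ^ n) ×ˢ Finset.range (2 ^ n)).filter (fun p => p.1 &&& p.2 = 0)).card
      ≤ 3 ^ n := by
  calc _ ≤ (Fintype.piFinset fun _ : Fin n =>
          ({(false, false), (true, false), (false, true)} : Finset (Bool × Bool))).card := by
        refine Finset.card_le_card_of_injOn (bitPairs n) (fun p hp => ?_) ?_
        · exact bitPairs_mem_piFinset (Finset.mem_filter.1 hp).2
        · refine (bitPairs_injOn n).mono fun p hp => ?_
          simp only [Finset.coe_filter, Finset.mem_product, Finset.mem_range] at hp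
          exact hp.1
    _ = 3 ^ n := by simp

theorem and_eq_zero_of_xor_apply_eq_apply_add {σ : ℕ → ℕ} (hσ : Function.Injective σ)
    (hlin : ∀ m n : ℕ, σ (m ^^^ n) = σ m ^^^ σ n) {k l : ℕ} (h : σ k ^^^ σ l = σ (k + l)) :
    k &&& l = 0 :=
  Nat.and_eq_zero_of_xor_eq_add (hσ (by rw [hlin, h]))

theorem stmt_14 (σ : ℕ → ℕ) (hσ : Function.Bijective σ)
    (hlin : ∀ m n : ℕ, σ (m ^^^ n) = σ m ^^^ σ n) (n : ℕ) :
    ((Finset.range (2 ^ n) ×ˢ Finset.range (2 ^ n)).filter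
      (fun p : ℕ × ℕ => p.1 + p.2 < 2 ^ n ∧
        σ p.1 ^^^ σ p.2 = σ (p.1 + p.2))).card ≤ 3 ^ n :=
  (Finset.card_le_card (Finset.monotone_filter_right _ fun _ _ hp =>
    and_eq_zero_of_xor_apply_eq_apply_add hσ.1 hlin hp.2)).trans
    (card_filter_and_eq_zero_le n)
end

section
/- Let 𝔽 ⊆ ℕ and suppose σ is a permutation of ℕ such that for each x = Σ xᵢ2ⁱ, the binary digits of σ(x) at positions outside 𝔽 agree with those of x (σ may act arbitrarily on the digits in 𝔽). If m = #(𝔽 ∩ [0,n)), then #A_n^σ ≤ 4 · 2^m · 6^n, where A_n^σ = { (x,y,z) ∈ [0,2^n)³ : x+y-z ∈ [0,2^n) and σ(x) ⊕ σ(y) ⊕ σ(z) = σ(x+y-z) }. -/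
/-- `A n τ`: triples `(x,y,z) ∈ [0,2^n)³` with `x+y-z ∈ [0,2^n)` and
`τ(x) ⊕ τ(y) ⊕ τ(z) = τ(x+y-z)`. -/
def A (n : ℕ) (τ : ℕ → ℕ) : Finset (ℕ × ℕ × ℕ) :=
  (Finset.range (2 ^ n) ×ˢ Finset.range (2 ^ n) ×ˢ Finset.range (2 ^ n)).filter
    (fun p => p.2.2 ≤ p.1 + p.2.1 ∧ p.1 + p.2.1 - p.2.2 < 2 ^ n ∧
      τ p.1 ^^^ τ p.2.1 ^^^ τ p.2.2 = τ (p.1 + p.2.1 - p.2.2))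

lemma addXorAnd_s18 (a b : ℕ) : a + b = (a ^^^ b) + 2 * (a &&& b) := by
  induction a using Nat.binaryRec generalizing b with
  | zero => simp
  | bit c a ih =>
    induction b using Nat.binaryRec with
    | zero => simp
    | bit d b _ =>
      rw [Nat.xor_bit, Nat.land_bit, Nat.bit_val, Nat.bit_val, Nat.bit_val, Nat.bit_val]
      have := ih b
      cases c <;> cases d <;> simp [Bool.toNat] <;> omega

lemma selfEq (a b : ℕ) : a = (a &&& b) ^^^ (a &&& (a ^^^ b)) := by
  apply Nat.eq_of_testBit_eq
  intro i
  simp only [Nat.testBit_xor, Nat.testBit_and]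
  cases a.testBit i <;> cases b.testBit i <;> rfl

lemma xorCancel {a b c : ℕ} (h : a ^^^ b = a ^^^ c) : b = c := by
  have := congrArg (a ^^^ ·) h
  simpa [← Nat.xor_assoc] using this

lemma bitsInj {n a b : ℕ} (ha : a < 2 ^ n) (hb : b < 2 ^ n)
    (h : (Finset.range n).filter (a.testBit ·) = (Finset.range n).filter (b.testBit ·)) :
    a = b := by
  apply Nat.eq_of_testBit_eq
  intro i
  by_cases hi : i < n
  · have := Finset.ext_iff.mp h i
    simp only [Finset.mem_filter, Finset.mem_range, hi, true_and] at this
    cases hab : a.testBit i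
    · cases hbb : b.testBit i
      · rfl
      · exact absurd (this.mpr hbb) (by simp [hab])
    · exact (this.mp hab).symm
  · rw [Nat.testBit_eq_false_of_lt, Nat.testBit_eq_false_of_lt]
    · exact lt_of_lt_of_le hb (Nat.pow_le_pow_right (by norm_num) (le_of_not_gt hi))
    · exact lt_of_lt_of_le ha (Nat.pow_le_pow_right (by norm_num) (le_of_not_gt hi))

lemma cardV (F : Set ℕ) [DecidablePred (· ∈ F)] (n : ℕ) :
    ((Finset.range (2 ^ n)).filter
        (fun v => ∀ i ∈ Finset.range n, v.testBit i = true → i ∈ F)).card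
      ≤ 2 ^ ((Finset.range n).filter (· ∈ F)).card := by
  rw [← Finset.card_powerset]
  apply Finset.card_le_card_of_injOn (fun v => (Finset.range n).filter (v.testBit ·))
  · intro v hv
    simp only [Finset.mem_coe, Finset.mem_filter, Finset.mem_range] at hv
    simp only [Finset.mem_coe, Finset.mem_powerset]
    intro i hi
    simp only [Finset.mem_filter, Finset.mem_range] at hi ⊢
    exact ⟨hi.1, hv.2 i hi.1 hi.2⟩
  · intro a ha b hb hab
    simp only [Finset.coe_filter, Finset.mem_range, Set.mem_setOf_eq] at ha hb
    exact bitsInj ha.1 hb.1 hab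

lemma cardD (n : ℕ) :
    ((Finset.range (2 ^ n) ×ˢ Finset.range (2 ^ n)).filter
        (fun p => p.2 &&& p.1 = p.2)).card ≤ 3 ^ n := by
  have hs : ((Finset.range n).powerset.sigma (fun S => S.powerset)).card = 3 ^ n := by
    rw [Finset.card_sigma]
    have : ∀ S ∈ (Finset.range n).powerset, S.powerset.card = 2 ^ S.card := by
      intro S _; exact Finset.card_powerset S
    rw [Finset.sum_congr rfl this, Finset.sum_powerset_apply_card]
    have h3 : ((2 : ℕ) + 1) ^ (Finset.range n).card
        = ∑ k ∈ Finset.range ((Finset.range n).card + 1),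
          (2 : ℕ) ^ k * 1 ^ ((Finset.range n).card - k) * (Finset.range n).card.choose k :=
      (Commute.all (2 : ℕ) 1).add_pow (Finset.range n).card
    simp only [one_pow, mul_one, Finset.card_range] at h3
    simp only [smul_eq_mul, Finset.card_range]
    rw [show (3:ℕ) = 2 + 1 by rfl] at *
    rw [h3]
    exact Finset.sum_congr rfl (fun k _ => by ring)
  rw [← hs]
  apply Finset.card_le_card_of_injOn
    (fun p => (⟨(Finset.range n).filter (p.1.testBit ·),
       (Finset.range n).filter (p.2.testBit ·)⟩ : Σ _ : Finset ℕ, Finset ℕ))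
  · intro p hp
    simp only [Finset.mem_coe, Finset.mem_filter, Finset.mem_product, Finset.mem_range] at hp
    obtain ⟨⟨hu, ht⟩, hsub⟩ := hp
    simp only [Finset.mem_coe, Finset.mem_sigma, Finset.mem_powerset]
    constructor
    · exact Finset.filter_subset _ _
    · intro i hi
      simp only [Finset.mem_filter, Finset.mem_range] at hi ⊢
      refine ⟨hi.1, ?_⟩
      have := congrArg (fun w => w.testBit i) hsub
      simp only [Nat.testBit_and, hi.2, Bool.true_and] at this
      exact this
  · intro p hp q hq hpq
    simp only [Finset.mem_coe, Finset.mem_filter, Finset.mem_product, Finset.mem_range] at hp hq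
    have h1 : (Finset.range n).filter (p.1.testBit ·) = (Finset.range n).filter (q.1.testBit ·) :=
      congrArg Sigma.fst hpq
    have h2 : (Finset.range n).filter (p.2.testBit ·) = (Finset.range n).filter (q.2.testBit ·) := by
      have := Sigma.mk.inj_iff.mp hpq
      exact eq_of_heq this.2
    exact Prod.ext (bitsInj hp.1.1 hq.1.1 h1) (bitsInj hp.1.2 hq.1.2 h2)

theorem stmt_18 (F : Set ℕ) [DecidablePred (· ∈ F)] (σ : ℕ → ℕ)
    (hσ : Function.Bijective σ)
    (hfix : ∀ x i : ℕ, i ∉ F → Nat.testBit (σ x) i = Nat.testBit x i)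
    (n m : ℕ) (hm : m = ((Finset.range n).filter (· ∈ F)).card) :
    (A n σ).card ≤ 4 * 2 ^ m * 6 ^ n := by
  classical
  set V := (Finset.range (2 ^ n)).filter
      (fun v => ∀ i ∈ Finset.range n, v.testBit i = true → i ∈ F) with hV
  set D := (Finset.range (2 ^ n) ×ˢ Finset.range (2 ^ n)).filter
      (fun p => p.2 &&& p.1 = p.2) with hD
  set B : Finset (ℕ × ℕ × ℕ × ℕ) := Finset.range (2 ^ n) ×ˢ V ×ˢ D with hB
  have key : (A n σ).card ≤ B.card := by
    apply Finset.card_le_card_of_injOn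
      (fun p => (p.1,
        p.1 ^^^ p.2.1 ^^^ (p.2.2 ^^^ (p.1 + p.2.1 - p.2.2)),
        p.2.2 ^^^ (p.1 + p.2.1 - p.2.2),
        p.2.2 &&& (p.2.2 ^^^ (p.1 + p.2.1 - p.2.2))))
    · rintro ⟨x, y, z⟩ hp
      simp only [Finset.mem_coe, A, Finset.mem_filter, Finset.mem_product, Finset.mem_range] at hp
      obtain ⟨⟨hx, hy, hz⟩, hzle, hw, hσeq⟩ := hp
      set w := x + y - z with hwdef
      have hu : z ^^^ w < 2 ^ n := Nat.xor_lt_two_pow hz hw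
      simp only [Finset.mem_coe, hB, Finset.mem_product, Finset.mem_range]
      refine ⟨hx, ?_, ?_⟩
      · -- v ∈ V
        simp only [hV, Finset.mem_filter, Finset.mem_range]
        refine ⟨Nat.xor_lt_two_pow (Nat.xor_lt_two_pow hx hy) hu, ?_⟩
        intro i _ hbit
        by_contra hiF
        have h0 : (σ x ^^^ σ y) ^^^ (σ z ^^^ σ w) = 0 := by
          rw [← Nat.xor_assoc, hσeq, Nat.xor_self]
        have h1 : Nat.testBit ((σ x ^^^ σ y) ^^^ (σ z ^^^ σ w)) i = false := by
          rw [h0]; simp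
        simp only [Nat.testBit_xor, hfix x i hiF, hfix y i hiF, hfix z i hiF,
          hfix w i hiF] at h1
        simp only [Nat.testBit_xor] at hbit
        rw [h1] at hbit
        exact Bool.false_ne_true hbit
      · -- (u, t) ∈ D
        simp only [hD, Finset.mem_filter, Finset.mem_product, Finset.mem_range]
        refine ⟨⟨hu, lt_of_le_of_lt Nat.and_le_left hz⟩, ?_⟩
        apply Nat.eq_of_testBit_eq
        intro i
        simp only [Nat.testBit_and]
        cases z.testBit i <;> cases (z ^^^ w).testBit i <;> rfl
    · rintro ⟨x, y, z⟩ hp ⟨x', y', z'⟩ hq hpq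
      simp only [Finset.mem_coe, A, Finset.mem_filter, Finset.mem_product,
        Finset.mem_range] at hp hq
      obtain ⟨⟨hx, hy, hz⟩, hzle, hw, -⟩ := hp
      obtain ⟨⟨hx', hy', hz'⟩, hzle', hw', -⟩ := hq
      simp only [Prod.mk.injEq] at hpq
      obtain ⟨hxe, hve, hue, hte⟩ := hpq
      subst hxe
      set w := x + y - z with hwdef
      set w' := x + y' - z' with hwdef'
      -- y = y'
      have hy2 : y = y' := by
        have h := hve
        rw [Nat.xor_assoc, Nat.xor_assoc, hue] at h
        have h2 := xorCancel h
        have h3 : (z' ^^^ w') ^^^ y = (z' ^^^ w') ^^^ y' := by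
          rw [Nat.xor_comm _ y, Nat.xor_comm _ y']; exact h2
        exact xorCancel h3
      subst hy2
      -- sums equal
      have hsum : z + w = z' + w' := by omega
      have hxor : z ^^^ w = z' ^^^ w' := hue
      have hand : z &&& w = z' &&& w' := by
        have e1 := addXorAnd_s18 z w
        have e2 := addXorAnd_s18 z' w'
        omega
      have hz2 : z = z' := by
        calc z = (z &&& w) ^^^ (z &&& (z ^^^ w)) := selfEq z w
          _ = (z' &&& w') ^^^ (z' &&& (z' ^^^ w')) := by rw [hand, hte]
          _ = z' := (selfEq z' w').symm
      simp [hz2]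
  have hBcard : B.card = 2 ^ n * (V.card * D.card) := by
    rw [hB, Finset.card_product, Finset.card_product, Finset.card_range]
  have hVc : V.card ≤ 2 ^ m := by rw [hm]; exact cardV F n
  have hDc : D.card ≤ 3 ^ n := cardD n
  calc (A n σ).card ≤ B.card := key
    _ = 2 ^ n * (V.card * D.card) := hBcard
    _ ≤ 2 ^ n * (2 ^ m * 3 ^ n) :=
        Nat.mul_le_mul_left _ (Nat.mul_le_mul hVc hDc)
    _ = 2 ^ m * 6 ^ n := by
        rw [show (6 : ℕ) = 2 * 3 by rfl, mul_pow]; ring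
    _ ≤ 4 * 2 ^ m * 6 ^ n := by nlinarith [(Nat.pow_pos (show 0 < 6 by norm_num) : 0 < 6 ^ n)]
end
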